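/- Let N₁ and N₂ be two norms on ℝ^d and let S ⊆ ℝ^d be a nonempty closed set with 0 ∈ S. For i = 1,2 and ξ ∈ ℝ^d \ S, let ηᵢ ∈ S be any point minimizing the Nᵢ-distance from ξ to S (such minimizers exist since S is closed and ℝ^d is finite-dimensional), and set Aᵢ(ξ) = min( Nᵢ(ξ−ηᵢ)/(1+Nᵢ(ηᵢ)), 1/(1+Nᵢ(ξ)) ). Then there exist constants 0 < c₁ ≤ c₂, depending only on d, the two norms and S, such that for every ξ ∈ ℝ^d \ S and every admissible choice of the minimizers η₁, η₂ one has c₁·A₁(ξ) ≤ A₂(ξ) ≤ c₂·A₁(ξ). -/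
import Mathlib


section aux
variable {d : ℕ} {N : (Fin d → ℝ) → ℝ}

lemma myN_zero (hzero : ∀ x, N x = 0 ↔ x = 0) : N 0 = 0 := (hzero 0).mpr rfl

lemma myN_neg (hsmul : ∀ (c : ℝ) (x), N (c • x) = |c| * N x) (x : Fin d → ℝ) :
    N (-x) = N x := by
  have := hsmul (-1) x
  simpa using this

lemma myN_nonneg (hadd : ∀ x y, N (x + y) ≤ N x + N y)
    (hsmul : ∀ (c : ℝ) (x), N (c • x) = |c| * N x)
    (hzero : ∀ x, N x = 0 ↔ x = 0) (x : Fin d → ℝ) : 0 ≤ N x := by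
  have h := hadd x (-x)
  rw [add_neg_cancel, myN_zero hzero, myN_neg hsmul] at h
  linarith

lemma myN_sum_le (hadd : ∀ x y, N (x + y) ≤ N x + N y)
    (hzero : ∀ x, N x = 0 ↔ x = 0)
    (s : Finset (Fin d)) (f : Fin d → (Fin d → ℝ)) :
    N (∑ i ∈ s, f i) ≤ ∑ i ∈ s, N (f i) := by
  induction s using Finset.cons_induction with
  | empty => simp [myN_zero hzero]
  | cons a s ha ih =>
      rw [Finset.sum_cons, Finset.sum_cons]
      exact (hadd _ _).trans (by linarith)

lemma myN_upper (hadd : ∀ x y, N (x + y) ≤ N x + N y)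
    (hsmul : ∀ (c : ℝ) (x), N (c • x) = |c| * N x)
    (hzero : ∀ x, N x = 0 ↔ x = 0) :
    ∃ C : ℝ, 0 < C ∧ ∀ x, N x ≤ C * ‖x‖ := by
  classical
  set e : Fin d → (Fin d → ℝ) := fun i j => if i = j then 1 else 0 with he
  set C : ℝ := 1 + ∑ i : Fin d, N (e i) with hC
  have hCpos : 0 < C := by
    have : 0 ≤ ∑ i : Fin d, N (e i) :=
      Finset.sum_nonneg fun i _ => myN_nonneg hadd hsmul hzero _
    linarith
  refine ⟨C, hCpos, fun x => ?_⟩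
  have hx : x = ∑ i : Fin d, x i • e i := pi_eq_sum_univ x
  calc N x ≤ ∑ i : Fin d, N (x i • e i) := by
        conv_lhs => rw [hx]
        exact myN_sum_le hadd hzero _ _
    _ = ∑ i : Fin d, |x i| * N (e i) := by simp [hsmul]
    _ ≤ ∑ i : Fin d, ‖x‖ * N (e i) := by
        refine Finset.sum_le_sum fun i _ => ?_
        exact mul_le_mul_of_nonneg_right
          (by simpa using norm_le_pi_norm x i) (myN_nonneg hadd hsmul hzero _)
    _ = (∑ i : Fin d, N (e i)) * ‖x‖ := by rw [← Finset.mul_sum, mul_comm]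
    _ ≤ C * ‖x‖ := by
        apply mul_le_mul_of_nonneg_right _ (norm_nonneg x)
        simp [hC]

lemma myN_continuous (hadd : ∀ x y, N (x + y) ≤ N x + N y)
    (hsmul : ∀ (c : ℝ) (x), N (c • x) = |c| * N x)
    (hzero : ∀ x, N x = 0 ↔ x = 0) : Continuous N := by
  obtain ⟨C, hC, hub⟩ := myN_upper hadd hsmul hzero
  have key : ∀ x y : Fin d → ℝ, N x - N y ≤ C * ‖x - y‖ := by
    intro x y
    have h1 : N x ≤ N y + N (x - y) := by
      have := hadd y (x - y); simpa using this
    have := hub (x - y)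
    linarith
  apply (LipschitzWith.of_dist_le_mul (K := C.toNNReal) (f := N) ?_).continuous
  intro x y
  rw [Real.dist_eq, dist_eq_norm, Real.coe_toNNReal _ hC.le]
  rw [abs_sub_le_iff]
  constructor
  · exact key x y
  · have := key y x
    rwa [show y - x = -(x - y) by ring, norm_neg] at this

lemma myN_lower (hadd : ∀ x y, N (x + y) ≤ N x + N y)
    (hsmul : ∀ (c : ℝ) (x), N (c • x) = |c| * N x)
    (hzero : ∀ x, N x = 0 ↔ x = 0) :
    ∃ c : ℝ, 0 < c ∧ ∀ x, c * ‖x‖ ≤ N x := by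
  by_cases hd : ∀ x : Fin d → ℝ, x = 0
  · refine ⟨1, one_pos, fun x => ?_⟩
    rw [hd x]; simp [myN_zero hzero]
  push_neg at hd
  obtain ⟨x₀, hx₀⟩ := hd
  have hsne : (Metric.sphere (0 : Fin d → ℝ) 1).Nonempty := by
    refine ⟨‖x₀‖⁻¹ • x₀, ?_⟩
    simp [norm_smul, norm_ne_zero_iff.mpr hx₀, inv_mul_cancel₀]
  obtain ⟨z, hz, hzmin⟩ := (isCompact_sphere (0 : Fin d → ℝ) 1).exists_isMinOn hsne
    ((myN_continuous hadd hsmul hzero).continuousOn)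
  have hz1 : ‖z‖ = 1 := by simpa using hz
  have hzne : z ≠ 0 := by intro h; rw [h] at hz1; simp at hz1
  have hc : 0 < N z :=
    lt_of_le_of_ne (myN_nonneg hadd hsmul hzero z) (fun h => hzne ((hzero z).mp h.symm))
  refine ⟨N z, hc, fun x => ?_⟩
  rcases eq_or_ne x 0 with rfl | hx
  · simp [myN_zero hzero]
  have hxn : (0:ℝ) < ‖x‖ := norm_pos_iff.mpr hx
  have hu : (‖x‖⁻¹ • x) ∈ Metric.sphere (0 : Fin d → ℝ) 1 := by
    simp [norm_smul, abs_of_pos (inv_pos.mpr hxn), inv_mul_cancel₀ hxn.ne']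
  have h1 : N z ≤ N (‖x‖⁻¹ • x) := hzmin hu
  have h2 : N (‖x‖⁻¹ • x) = ‖x‖⁻¹ * N x := by
    rw [hsmul]; congr 1; exact abs_of_pos (inv_pos.mpr hxn)
  rw [h2] at h1
  calc N z * ‖x‖ ≤ (‖x‖⁻¹ * N x) * ‖x‖ := by nlinarith
    _ = N x := by field_simp


lemma half1 (D n m : ℝ) (hD : 0 ≤ D) (hn : 0 ≤ n) (hm : 0 ≤ m)
    (hDm : D ≤ m) (hnm : n ≤ m + D) :
    min D 1 / (1 + m) ≤ 2 * min (D / (1 + n)) (1 / (1 + m)) := by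
  set M := min D 1 with hM
  have hM1 : M ≤ D := min_le_left _ _
  have hM2 : M ≤ 1 := min_le_right _ _
  have hM0 : 0 ≤ M := le_min hD zero_le_one
  have hm1 : (0:ℝ) < 1 + m := by linarith
  have hn1 : (0:ℝ) < 1 + n := by linarith
  have h1 : M / (1 + m) ≤ 2 * (D / (1 + n)) := by
    rw [mul_div_assoc']
    rw [div_le_div_iff₀ hm1 hn1]
    nlinarith [mul_nonneg (sub_nonneg.mpr hM1) hm, mul_nonneg (sub_nonneg.mpr hM2) hD,
      mul_nonneg hM0 (by linarith : 0 ≤ m + D - n)]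
  have h2 : M / (1 + m) ≤ 2 * (1 / (1 + m)) := by
    rw [mul_div_assoc']
    rw [div_le_div_iff₀ hm1 hm1]
    nlinarith
  calc M / (1 + m) ≤ min (2 * (D / (1 + n))) (2 * (1 / (1 + m))) := le_min h1 h2
    _ = 2 * min (D / (1 + n)) (1 / (1 + m)) := by
        rw [← mul_min_of_nonneg _ _ (by norm_num : (0:ℝ) ≤ 2)]

lemma half2 (D n m : ℝ) (hD : 0 ≤ D) (hn : 0 ≤ n) (hm : 0 ≤ m)
    (hmn : m ≤ n + D) :
    min (D / (1 + n)) (1 / (1 + m)) ≤ 2 * (min D 1 / (1 + m)) := by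
  have hm1 : (0:ℝ) < 1 + m := by linarith
  have hn1 : (0:ℝ) < 1 + n := by linarith
  rcases le_total D 1 with h | h
  · rw [min_eq_left h]
    refine (min_le_left _ _).trans ?_
    rw [mul_div_assoc']
    rw [div_le_div_iff₀ hn1 hm1]
    nlinarith [mul_nonneg hD hn, mul_nonneg hD (by linarith : 0 ≤ n + D - m),
      mul_nonneg hD (by linarith : (0:ℝ) ≤ 1 - D)]
  · rw [min_eq_right h]
    refine (min_le_right _ _).trans ?_
    rw [mul_div_assoc']
    rw [div_le_div_iff₀ hm1 hm1]
    nlinarith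
  
lemma bcomp (k D₁ D₂ m₁ m₂ : ℝ) (hk : 1 ≤ k) (hD₁ : 0 ≤ D₁) (hD₂ : 0 ≤ D₂)
    (hm₁ : 0 ≤ m₁) (hm₂ : 0 ≤ m₂) (hD : D₂ ≤ k * D₁) (hm : m₁ ≤ k * m₂) :
    min D₂ 1 / (1 + m₂) ≤ k ^ 2 * (min D₁ 1 / (1 + m₁)) := by
  have hm1 : (0:ℝ) < 1 + m₁ := by linarith
  have hm2 : (0:ℝ) < 1 + m₂ := by linarith
  have h1 : min D₂ 1 ≤ k * min D₁ 1 := by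
    rw [mul_min_of_nonneg _ _ (by linarith : (0:ℝ) ≤ k)]
    exact le_min ((min_le_left _ _).trans hD) ((min_le_right _ _).trans (by linarith))
  have h2 : 1 / (1 + m₂) ≤ k * (1 / (1 + m₁)) := by
    rw [mul_div_assoc', div_le_div_iff₀ hm2 hm1]
    nlinarith
  calc min D₂ 1 / (1 + m₂) = min D₂ 1 * (1 / (1 + m₂)) := by ring
    _ ≤ (k * min D₁ 1) * (k * (1 / (1 + m₁))) := by
        refine mul_le_mul h1 h2 (by positivity) ?_
        positivity
    _ = k ^ 2 * (min D₁ 1 / (1 + m₁)) := by ring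



/-- Equivalence of envelope functions defined via two different norms on `ℝ^d`:
if `S ⊆ ℝ^d` is a nonempty closed set containing `0`, and for `ξ ∉ S` and `i = 1,2` the point
`ηᵢ ∈ S` is any `Nᵢ`-distance minimizer from `ξ` to `S`, then the two envelope values
`Aᵢ(ξ) = min (Nᵢ(ξ-ηᵢ)/(1+Nᵢ(ηᵢ))) (1/(1+Nᵢ(ξ)))` are comparable, with constants independent of
`ξ` and of the choice of minimizers. -/
theorem stmt0 (d : ℕ) (N₁ N₂ : (Fin d → ℝ) → ℝ)
    (hN₁add : ∀ x y, N₁ (x + y) ≤ N₁ x + N₁ y)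
    (hN₁smul : ∀ (c : ℝ) (x), N₁ (c • x) = |c| * N₁ x)
    (hN₁zero : ∀ x, N₁ x = 0 ↔ x = 0)
    (hN₂add : ∀ x y, N₂ (x + y) ≤ N₂ x + N₂ y)
    (hN₂smul : ∀ (c : ℝ) (x), N₂ (c • x) = |c| * N₂ x)
    (hN₂zero : ∀ x, N₂ x = 0 ↔ x = 0)
    (S : Set (Fin d → ℝ)) (hSclosed : IsClosed S) (hSne : S.Nonempty)
    (h0S : (0 : Fin d → ℝ) ∈ S) :
    ∃ c₁ c₂ : ℝ, 0 < c₁ ∧ c₁ ≤ c₂ ∧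
      ∀ ξ, ξ ∉ S → ∀ η₁ ∈ S, ∀ η₂ ∈ S,
        (∀ y ∈ S, N₁ (ξ - η₁) ≤ N₁ (ξ - y)) →
        (∀ y ∈ S, N₂ (ξ - η₂) ≤ N₂ (ξ - y)) →
        c₁ * min (N₁ (ξ - η₁) / (1 + N₁ η₁)) (1 / (1 + N₁ ξ)) ≤
            min (N₂ (ξ - η₂) / (1 + N₂ η₂)) (1 / (1 + N₂ ξ)) ∧
          min (N₂ (ξ - η₂) / (1 + N₂ η₂)) (1 / (1 + N₂ ξ)) ≤
            c₂ * min (N₁ (ξ - η₁) / (1 + N₁ η₁)) (1 / (1 + N₁ ξ)) := by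
  obtain ⟨U₁, hU₁pos, hU₁⟩ := myN_upper hN₁add hN₁smul hN₁zero
  obtain ⟨U₂, hU₂pos, hU₂⟩ := myN_upper hN₂add hN₂smul hN₂zero
  obtain ⟨l₁, hl₁pos, hl₁⟩ := myN_lower hN₁add hN₁smul hN₁zero
  obtain ⟨l₂, hl₂pos, hl₂⟩ := myN_lower hN₂add hN₂smul hN₂zero
  set k : ℝ := max 1 (max (U₂ / l₁) (U₁ / l₂)) with hk
  have hk1 : 1 ≤ k := le_max_left _ _
  have hk0 : 0 < k := lt_of_lt_of_le one_pos hk1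
  have h21 : ∀ x, N₂ x ≤ k * N₁ x := by
    intro x
    have h1 : N₂ x ≤ (U₂ / l₁) * N₁ x := by
      have hb := hl₁ x
      have ha := hU₂ x
      rw [div_mul_eq_mul_div, le_div_iff₀ hl₁pos]
      nlinarith
    refine h1.trans (mul_le_mul_of_nonneg_right ?_ (myN_nonneg hN₁add hN₁smul hN₁zero x))
    exact le_trans (le_max_left _ _) (le_max_right _ _)
  have h12 : ∀ x, N₁ x ≤ k * N₂ x := by
    intro x
    have h1 : N₁ x ≤ (U₁ / l₂) * N₂ x := by
      have hb := hl₂ x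
      have ha := hU₁ x
      rw [div_mul_eq_mul_div, le_div_iff₀ hl₂pos]
      nlinarith
    refine h1.trans (mul_le_mul_of_nonneg_right ?_ (myN_nonneg hN₂add hN₂smul hN₂zero x))
    exact le_trans (le_max_right _ _) (le_max_right _ _)
  have hkk : 1 ≤ k ^ 2 := by nlinarith
  refine ⟨1 / (4 * k ^ 2), 4 * k ^ 2, by positivity, ?_, ?_⟩
  · rw [div_le_iff₀ (by positivity)]
    nlinarith [mul_le_mul hkk hkk zero_le_one (by positivity : (0:ℝ) ≤ k ^ 2)]
  intro ξ hξ η₁ hη₁ η₂ hη₂ hmin₁ hmin₂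
  set D₁ := N₁ (ξ - η₁) with hD₁def
  set D₂ := N₂ (ξ - η₂) with hD₂def
  set n₁ := N₁ η₁ with hn₁def
  set n₂ := N₂ η₂ with hn₂def
  set m₁ := N₁ ξ with hm₁def
  set m₂ := N₂ ξ with hm₂def
  have hD₁0 : 0 ≤ D₁ := myN_nonneg hN₁add hN₁smul hN₁zero _
  have hD₂0 : 0 ≤ D₂ := myN_nonneg hN₂add hN₂smul hN₂zero _
  have hn₁0 : 0 ≤ n₁ := myN_nonneg hN₁add hN₁smul hN₁zero _
  have hn₂0 : 0 ≤ n₂ := myN_nonneg hN₂add hN₂smul hN₂zero _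
  have hm₁0 : 0 ≤ m₁ := myN_nonneg hN₁add hN₁smul hN₁zero _
  have hm₂0 : 0 ≤ m₂ := myN_nonneg hN₂add hN₂smul hN₂zero _
  have hD₁m : D₁ ≤ m₁ := by have := hmin₁ 0 h0S; simpa using this
  have hD₂m : D₂ ≤ m₂ := by have := hmin₂ 0 h0S; simpa using this
  have hn₁m : n₁ ≤ m₁ + D₁ := by
    have h := hN₁add ξ (-(ξ - η₁))
    rw [myN_neg hN₁smul] at h
    have : ξ + -(ξ - η₁) = η₁ := by abel
    rw [this] at h
    exact h
  have hn₂m : n₂ ≤ m₂ + D₂ := by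
    have h := hN₂add ξ (-(ξ - η₂))
    rw [myN_neg hN₂smul] at h
    have : ξ + -(ξ - η₂) = η₂ := by abel
    rw [this] at h
    exact h
  have hm₁n : m₁ ≤ n₁ + D₁ := by
    have h := hN₁add η₁ (ξ - η₁)
    have : η₁ + (ξ - η₁) = ξ := by abel
    rw [this] at h
    exact h
  have hm₂n : m₂ ≤ n₂ + D₂ := by
    have h := hN₂add η₂ (ξ - η₂)
    have : η₂ + (ξ - η₂) = ξ := by abel
    rw [this] at h
    exact h
  have hD21 : D₂ ≤ k * D₁ := (hmin₂ η₁ hη₁).trans (h21 _)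
  have hD12 : D₁ ≤ k * D₂ := (hmin₁ η₂ hη₂).trans (h12 _)
  have hm21 : m₂ ≤ k * m₁ := h21 ξ
  have hm12 : m₁ ≤ k * m₂ := h12 ξ
  set A₁ := min (D₁ / (1 + n₁)) (1 / (1 + m₁)) with hA₁def
  set A₂ := min (D₂ / (1 + n₂)) (1 / (1 + m₂)) with hA₂def
  set B₁ := min D₁ 1 / (1 + m₁) with hB₁def
  set B₂ := min D₂ 1 / (1 + m₂) with hB₂def
  have hBA₁ : B₁ ≤ 2 * A₁ := half1 D₁ n₁ m₁ hD₁0 hn₁0 hm₁0 hD₁m hn₁m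
  have hBA₂ : B₂ ≤ 2 * A₂ := half1 D₂ n₂ m₂ hD₂0 hn₂0 hm₂0 hD₂m hn₂m
  have hAB₁ : A₁ ≤ 2 * B₁ := half2 D₁ n₁ m₁ hD₁0 hn₁0 hm₁0 hm₁n
  have hAB₂ : A₂ ≤ 2 * B₂ := half2 D₂ n₂ m₂ hD₂0 hn₂0 hm₂0 hm₂n
  have hB21 : B₂ ≤ k ^ 2 * B₁ := bcomp k D₁ D₂ m₁ m₂ hk1 hD₁0 hD₂0 hm₁0 hm₂0 hD21 hm12
  have hB12 : B₁ ≤ k ^ 2 * B₂ := bcomp k D₂ D₁ m₂ m₁ hk1 hD₂0 hD₁0 hm₂0 hm₁0 hD12 hm21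
  have hA₂0 : 0 ≤ A₂ := le_min (by positivity) (by positivity)
  have hA₁0 : 0 ≤ A₁ := le_min (by positivity) (by positivity)
  have hk2 : (0:ℝ) ≤ k ^ 2 := by positivity
  constructor
  · have h1 : A₁ ≤ 4 * k ^ 2 * A₂ := by
      calc A₁ ≤ 2 * B₁ := hAB₁
        _ ≤ 2 * (k ^ 2 * B₂) := by linarith
        _ ≤ 2 * (k ^ 2 * (2 * A₂)) := by
            have := mul_le_mul_of_nonneg_left hBA₂ hk2
            linarith
        _ = 4 * k ^ 2 * A₂ := by ring
    rw [div_mul_eq_mul_div, div_le_iff₀ (by positivity)]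
    linarith
  · calc A₂ ≤ 2 * B₂ := hAB₂
      _ ≤ 2 * (k ^ 2 * B₁) := by linarith
      _ ≤ 2 * (k ^ 2 * (2 * A₁)) := by
          have := mul_le_mul_of_nonneg_left hBA₁ hk2
          linarith
      _ = 4 * k ^ 2 * A₁ := by ring
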